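/- Let 𝔤 = 𝔤_{-k} ⊕ ⋯ ⊕ 𝔤_0 be a fundamental graded Lie algebra with an adapted Euclidean metric ⟨·,·⟩_𝔤, and equip 𝔥 = t*(𝔤) with the orthogonal-sum metric ⟨·,·⟩ (𝔤 ⊥ 𝔤*, induced metric on 𝔤*). If ⟨·,·⟩ is admissible, then ⟨·,·⟩_𝔤 is NOT Ad_{G_0}-invariant, where G_0 is the connected group with Lie algebra 𝔤_0. Equivalently: if ⟨·,·⟩_𝔤 is Ad_{G_0}-invariant, then ⟨·,·⟩ fails to be admissible. -/

import Mathlib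

open scoped RealInnerProductSpace

/-!
Statement 19: Let `𝔤 = 𝔤_{-k} ⊕ ⋯ ⊕ 𝔤_0` be a fundamental graded Lie algebra with an
adapted Euclidean metric `⟨·,·⟩_𝔤`, and equip `𝔥 = t^*(𝔤)` with the orthogonal-sum
metric. If this metric is admissible (equivalently, the `θ`-identity of Proposition
`criterion-adm` holds), then `⟨·,·⟩_𝔤` is NOT `Ad_{G_0}`-invariant; for the connected
group `G_0` with Lie algebra `𝔤_0`, `Ad_{G_0}`-invariance is expressed infinitesimally:
`⟪[A,x], y⟫ + ⟪x, [A,y]⟫ = 0` for all `A ∈ 𝔤_0`.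
-/

variable {G : Type*} [NormedAddCommGroup G] [InnerProductSpace ℝ G]
  [FiniteDimensional ℝ G] [LieRing G]

attribute [-instance] LieRing.toAddCommGroup

/-- The coadjoint action `L_X(α) = -α ∘ ad_X`. -/
noncomputable def coadAct (ad' : G → G →ₗ[ℝ] G) (x : G) (η : Module.Dual ℝ G) :
    Module.Dual ℝ G :=
  -(η ∘ₗ ad' x)

/-- The cotangent Lie bracket on `𝔥 = t^*(𝔤) = 𝔤 × 𝔤^*`. -/
noncomputable def ctBkt (ad' : G → G →ₗ[ℝ] G) (p q : G × Module.Dual ℝ G) :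
    G × Module.Dual ℝ G :=
  (⁅p.1, q.1⁆, coadAct ad' p.1 q.2 - coadAct ad' q.1 p.2)

/-- The musical isomorphism `♭ : 𝔤^* → 𝔤` of the metric. -/
noncomputable def flatG (α : Module.Dual ℝ G) : G :=
  (InnerProductSpace.toDual ℝ G).symm (LinearMap.toContinuousLinearMap α)

/-- The musical isomorphism `♯ : 𝔤 → 𝔤^*`, `X ↦ ⟪X, ·⟫`. -/
noncomputable def sharpG (x : G) : Module.Dual ℝ G :=
  ((innerSL ℝ x : G →L[ℝ] ℝ) : G →ₗ[ℝ] ℝ)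

/-- The involution `θ` of `𝔥 = 𝔤 × 𝔤^*` exchanging `𝔤` and `𝔤^*` via `♯`, `♭`. -/
noncomputable def thetaG (p : G × Module.Dual ℝ G) : G × Module.Dual ℝ G :=
  (flatG p.2, sharpG p.1)

/-!
The θ-identity, evaluated at `X = 0`, `ξ = a♯`, `r = c♯`, says `(ad C)ᵀ = ad Y ∘ (ad Y)ᵀ` with
`C = -(ad Y)ᵀ Y`. For `Y` homogeneous of negative degree, an adapted metric puts `C` in `𝔤₀`, so
`Ad_{G₀}`-invariance makes `ad C` skew, and then `|(ad Y)ᵀ b|² = ⟪b, ad C b⟫ = 0`: every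
`Y ∈ 𝔤_{-1}` is central. By faithfulness of the `𝔤₀`-action on `𝔤_{-1}` this forces `𝔤₀ = 0`.
-/

section OrthogonalDecomposition

variable {E : Type*} [NormedAddCommGroup E] [InnerProductSpace ℝ E]

theorem mem_of_forall_inner_eq_zero {ι : Type*} {V : ι → Submodule ℝ E}
    (hV : ∀ i j, i ≠ j → ∀ x ∈ V i, ∀ y ∈ V j, ⟪x, y⟫ = 0) (htop : ⨆ i, V i = ⊤) {j : ι}
    {x : E} (hx : ∀ i, i ≠ j → ∀ w ∈ V i, ⟪x, w⟫ = 0) : x ∈ V j := by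
  have hmem : x ∈ V j ⊔ ⨆ (i) (_ : i ≠ j), V i := by
    rw [← iSup_split_single, htop]
    exact Submodule.mem_top
  obtain ⟨y, hy, z, hz, rfl⟩ := Submodule.mem_sup.1 hmem
  have inner_z : ∀ u, (∀ i, i ≠ j → ∀ w ∈ V i, ⟪u, w⟫ = 0) → ⟪u, z⟫ = 0 := fun u hu => by
    have hle : (⨆ (i) (_ : i ≠ j), V i) ≤ (ℝ ∙ u)ᗮ := iSup₂_le fun i hi w hw =>
      Submodule.mem_orthogonal_singleton_iff_inner_right.2 (hu i hi w hw)
    exact Submodule.mem_orthogonal_singleton_iff_inner_right.1 (hle hz)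
  have hyz := inner_z y fun i hi w hw => hV j i hi.symm y hy w hw
  have hzz := inner_z (y + z) hx
  rw [inner_add_left, hyz, zero_add, inner_self_eq_zero] at hzz
  simpa [hzz] using hy

theorem adjoint_mem_of_mem_add [FiniteDimensional ℝ E] {ι : Type*} [Add ι] [IsLeftCancelAdd ι]
    {V : ι → Submodule ℝ E} (hV : ∀ i j, i ≠ j → ∀ x ∈ V i, ∀ y ∈ V j, ⟪x, y⟫ = 0)
    (htop : ⨆ i, V i = ⊤) {f : E →ₗ[ℝ] E} {i : ι} (hf : ∀ k, ∀ w ∈ V k, f w ∈ V (i + k))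
    {j : ι} {c : E} (hc : c ∈ V (i + j)) : f.adjoint c ∈ V j :=
  mem_of_forall_inner_eq_zero hV htop fun k hk w hw => by
    rw [LinearMap.adjoint_inner_left]
    exact hV _ _ (fun h => hk (add_left_cancel h).symm) c hc _ (hf k w hw)

end OrthogonalDecomposition

theorem LinearMap.eq_zero_of_adjoint_eq_comp_adjoint {𝕜 E : Type*} [RCLike 𝕜]
    [NormedAddCommGroup E] [InnerProductSpace 𝕜 E] [FiniteDimensional 𝕜 E] {f g : E →ₗ[𝕜] E}
    (hg : ∀ x, inner 𝕜 (g x) x = 0) (h : g.adjoint = f ∘ₗ f.adjoint) : f = 0 := by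
  have hadj : f.adjoint = 0 := LinearMap.ext fun x => inner_self_eq_zero.1 <| by
    rw [adjoint_inner_left, ← comp_apply, ← h, adjoint_inner_right, hg]
  rw [← adjoint_adjoint f, hadj, map_zero]

section

attribute [local instance] LieRing.toAddCommGroup

-- Free of `0`, so it applies to `G`, whose `0` is that of the norm rather than of the Lie ring.
theorem lie_eq_of_forall_lie_eq {L : Type*} [LieRing L] {y z : L} (h : ∀ w, ⁅y, w⁆ = z)
    (x : L) : ⁅x, y⁆ = z := by
  obtain rfl : z = 0 := (h y).symm.trans (lie_self y)
  rw [← lie_skew, h, neg_zero]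

end

set_option linter.unusedSectionVars false

theorem inner_flatG (η : Module.Dual ℝ G) (w : G) : ⟪flatG η, w⟫ = η w :=
  InnerProductSpace.toDual_symm_apply

theorem sharpG_zero : sharpG (0 : G) = 0 := by
  ext w
  simp [sharpG]

theorem flatG_sharpG (x : G) : flatG (sharpG x) = x :=
  ext_inner_right ℝ fun w => inner_flatG _ w

theorem flatG_sharpG_comp (f : G →ₗ[ℝ] G) (a : G) : flatG (sharpG a ∘ₗ f) = f.adjoint a :=
  ext_inner_right ℝ fun w => by
    rw [inner_flatG, LinearMap.adjoint_inner_left]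
    rfl

theorem flatG_neg (η : Module.Dual ℝ G) : flatG (-η) = -flatG η :=
  ext_inner_right ℝ fun w => by
    rw [inner_neg_left, inner_flatG, inner_flatG]
    rfl

theorem adjoint_ad_eq_of_thetaG (ad' : G → G →ₗ[ℝ] G) (had' : ∀ x y : G, ad' x y = ⁅x, y⁆)
    {Y a c : G}
    (h : thetaG (ctBkt ad' (0, sharpG a) (thetaG (ctBkt ad' (Y, 0) (0, sharpG c)))) =
      ctBkt ad' (thetaG (ctBkt ad' (0, 0) (thetaG (Y, 0)))) (0, sharpG c) +
        ctBkt ad' (Y, 0) (thetaG (ctBkt ad' (0, sharpG a) (thetaG (0, sharpG c))))) :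
    (ad' (-(ad' Y).adjoint c)).adjoint a = ⁅Y, (ad' c).adjoint a⁆ := by
  have lie_zero' : ∀ x : G, ⁅x, (0 : G)⁆ = 0 := fun x => by rw [← had', map_zero]
  simpa [ctBkt, coadAct, thetaG, lie_zero', sharpG_zero, flatG_sharpG, flatG_neg,
    ← flatG_sharpG_comp] using congrArg Prod.fst h

theorem admissible_implies_not_invariant_general
    (gr : ℤ → Submodule ℝ G)
    (hint : DirectSum.IsInternal gr)
    (hbkt : ∀ i j : ℤ, ∀ x ∈ gr i, ∀ y ∈ gr j, ⁅x, y⁆ ∈ gr (i + j))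
    -- the (ℝ-bilinear) bracket of `𝔤`, linear in the second argument:
    (ad' : G → G →ₗ[ℝ] G) (had' : ∀ x y : G, ad' x y = ⁅x, y⁆)
    -- the metric on `𝔤` is adapted to the gradation:
    (horth : ∀ i j : ℤ, i ≠ j → ∀ x ∈ gr i, ∀ y ∈ gr j, ⟪x, y⟫ = 0)
    -- fundamentality: the action of `𝔤_0` on `𝔤_{-1}` is faithful, and `𝔤_0 ≠ 0`:
    (hfaith : ∀ A ∈ gr 0, (∀ v ∈ gr (-1), ⁅A, v⁆ = 0) → A = 0)
    (h0ne : gr 0 ≠ ⊥)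
    -- admissibility of the orthogonal-sum metric of `𝔥 = t^*(𝔤)`, in its
    -- equivalent form (the `θ`-identity):
    (hadm : ∀ X ∈ gr 0, ∀ ξ : Module.Dual ℝ G, ∀ Y ∈ (⨆ i < (0 : ℤ), gr i),
      ∀ r : G × Module.Dual ℝ G,
        thetaG (ctBkt ad' (X, ξ) (thetaG (ctBkt ad' (Y, 0) r))) =
          ctBkt ad' (thetaG (ctBkt ad' (X, 0) (thetaG (Y, 0)))) r +
            ctBkt ad' (Y, 0) (thetaG (ctBkt ad' (X, ξ) (thetaG r)))) :
    -- conclusion: the metric of `𝔤` is not `Ad_{G_0}`-invariant (infinitesimally):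
    ¬ (∀ A ∈ gr 0, ∀ x y : G, ⟪⁅A, x⁆, y⟫ + ⟪x, ⁅A, y⁆⟫ = 0) := by
  intro hinv
  have hcentral : ∀ v ∈ gr (-1), ∀ w : G, ⁅v, w⁆ = 0 := by
    intro v hv
    have hdeg : ∀ k, ∀ w ∈ gr k, ad' v w ∈ gr (-1 + k) := fun k w hw =>
      had' v w ▸ hbkt _ _ v hv w hw
    have hC : -(ad' v).adjoint v ∈ gr 0 :=
      neg_mem (adjoint_mem_of_mem_add horth hint.submodule_iSup_eq_top hdeg (by simpa))
    have hskew : ∀ x, ⟪ad' (-(ad' v).adjoint v) x, x⟫ = 0 := fun x => by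
      have := hinv _ hC x x
      rw [real_inner_comm ⁅_, x⁆ x, ← had'] at this
      linarith
    have hneg : v ∈ ⨆ i < (0 : ℤ), gr i :=
      (le_iSup₂ (f := fun i (_ : i < 0) => gr i) (-1) (by norm_num)) hv
    have hadj : (ad' (-(ad' v).adjoint v)).adjoint = ad' v ∘ₗ (ad' v).adjoint :=
      LinearMap.ext fun a => by
        rw [LinearMap.comp_apply, had']
        exact adjoint_ad_eq_of_thetaG ad' had' (hadm 0 (zero_mem _) (sharpG a) v hneg (0, sharpG v))
    intro w
    rw [← had', LinearMap.eq_zero_of_adjoint_eq_comp_adjoint hskew hadj, LinearMap.zero_apply]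
  refine h0ne ((Submodule.eq_bot_iff _).2 fun A hA => hfaith A hA fun v hv => ?_)
  exact lie_eq_of_forall_lie_eq (hcentral v hv) A

theorem admissible_implies_not_invariant
    (gr : ℤ → Submodule ℝ G)
    (hint : DirectSum.IsInternal gr)
    (hnonpos : ∀ i : ℤ, 0 < i → gr i = ⊥)
    (hbkt : ∀ i j : ℤ, ∀ x ∈ gr i, ∀ y ∈ gr j, ⁅x, y⁆ ∈ gr (i + j))
    -- the (ℝ-bilinear) bracket of `𝔤`, linear in the second argument:
    (ad' : G → G →ₗ[ℝ] G) (had' : ∀ x y : G, ad' x y = ⁅x, y⁆)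
    -- the metric on `𝔤` is adapted to the gradation:
    (horth : ∀ i j : ℤ, i ≠ j → ∀ x ∈ gr i, ∀ y ∈ gr j, ⟪x, y⟫ = 0)
    -- fundamentality: the action of `𝔤_0` on `𝔤_{-1}` is faithful, and `𝔤_0 ≠ 0`:
    (hfaith : ∀ A ∈ gr 0, (∀ v ∈ gr (-1), ⁅A, v⁆ = 0) → A = 0)
    (h0ne : gr 0 ≠ ⊥)
    -- admissibility of the orthogonal-sum metric of `𝔥 = t^*(𝔤)`, in its
    -- equivalent form (the `θ`-identity):
    (hadm : ∀ X ∈ gr 0, ∀ ξ : Module.Dual ℝ G, ∀ Y ∈ (⨆ i < (0 : ℤ), gr i),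
      ∀ r : G × Module.Dual ℝ G,
        thetaG (ctBkt ad' (X, ξ) (thetaG (ctBkt ad' (Y, 0) r))) =
          ctBkt ad' (thetaG (ctBkt ad' (X, 0) (thetaG (Y, 0)))) r +
            ctBkt ad' (Y, 0) (thetaG (ctBkt ad' (X, ξ) (thetaG r)))) :
    -- conclusion: the metric of `𝔤` is not `Ad_{G_0}`-invariant (infinitesimally):
    ¬ (∀ A ∈ gr 0, ∀ x y : G, ⟪⁅A, x⁆, y⟫ + ⟪x, ⁅A, y⁆⟫ = 0) :=
  admissible_implies_not_invariant_general gr hint hbkt ad' had' horth hfaith h0ne hadm
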